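/- Let N ≥ 2 be an even integer and c = (c₁,c₂,c₃) ∈ ℝ³. The characteristic polynomial of the matrix ϖ(c) equals the product over signs s ∈ {+1,−1} and t ∈ {+1,−1} of (X − 2^{−N}(1 + s·c₁ + s·(−1)^{N/2}·t·c₂ + t·c₃))^{2^{N−2}}; that is, ϖ(c) has (counting multiplicity) exactly 2^{N−2} eigenvalues equal to each of the four values 2^{−N}(1 ± c₁ ± (−1)^{N/2}(−1)^p c₂ + (−1)^p c₃) for p ∈ {0,1}, where the two ± signs are taken equal. -/
import Mathlib


open Matrix BigOperators Polynomial
open scoped ComplexOrder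

/-- The three Pauli matrices. -/
noncomputable def pauli : Fin 3 → Matrix (Fin 2) (Fin 2) ℂ :=
  ![!![0, 1; 1, 0], !![0, -Complex.I; Complex.I, 0], !![1, 0; 0, -1]]

/-- The `N`-fold Kronecker power of a 2×2 matrix, with rows and columns indexed by
`Fin N → Fin 2` (the `N`-qubit computational basis). -/
noncomputable def kronPow (A : Matrix (Fin 2) (Fin 2) ℂ) (N : ℕ) :
    Matrix (Fin N → Fin 2) (Fin N → Fin 2) ℂ :=
  Matrix.of fun i j => ∏ k, A (i k) (j k)

/-- The `M³_N` state `ϖ(c) = 2^{-N} (I + c₁ σ₁^{⊗N} + c₂ σ₂^{⊗N} + c₃ σ₃^{⊗N})`. -/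
noncomputable def Mstate (N : ℕ) (c : Fin 3 → ℝ) :
    Matrix (Fin N → Fin 2) (Fin N → Fin 2) ℂ :=
  ((2 : ℂ) ^ N)⁻¹ • (1 + ∑ j : Fin 3, (c j : ℂ) • kronPow (pauli j) N)

set_option linter.unusedSectionVars false
set_option linter.unusedVariables false

section Abstract
variable {ι : Type*} [Fintype ι] [DecidableEq ι] {R : Type*} [CommRing R]

def pairMat (τ : ι → ι) (a b : ι → R) : Matrix ι ι R :=
  Matrix.of fun i j => if j = i then a i else if j = τ i then b i else 0

lemma pairMat_apply_split (τ : ι → ι) (hfix : ∀ i, τ i ≠ i) (a b : ι → R) (i j : ι) :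
    pairMat τ a b i j = (if j = i then a i else 0) + (if j = τ i then b i else 0) := by
  have hii : ¬ i = τ i := fun h => hfix i h.symm
  by_cases h1 : j = i
  · have h2 : ¬ j = τ i := by rw [h1]; exact hii
    simp [pairMat, h1, h2, hii]
  · simp [pairMat, h1]

lemma pairMat_mul (τ : ι → ι) (hτ : Function.Involutive τ) (hfix : ∀ i, τ i ≠ i)
    (a b : ι → R) (ha : ∀ i, a (τ i) = a i) (hb : ∀ i, b (τ i) = b i) :
    pairMat τ a b * pairMat τ a (fun i => -b i) =
      Matrix.diagonal (fun i => a i ^ 2 - b i ^ 2) := by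
  ext i j
  rw [Matrix.mul_apply]
  have hii : ¬ i = τ i := fun h => hfix i h.symm
  have key : ∀ k, pairMat τ a b i k * pairMat τ a (fun i' => -b i') k j
      = (if k = i then a i * pairMat τ a (fun i' => -b i') i j else 0)
        + (if k = τ i then b i * pairMat τ a (fun i' => -b i') (τ i) j else 0) := by
    intro k
    rw [pairMat_apply_split τ hfix]
    by_cases h1 : k = i
    · have h2 : ¬ k = τ i := by rw [h1]; exact hii
      simp [h1, h2, hii]
    · by_cases h2 : k = τ i
      · simp [h1, h2, hfix i]
      · simp [h1, h2]
  rw [Finset.sum_congr rfl (fun k _ => key k), Finset.sum_add_distrib,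
    Finset.sum_ite_eq' Finset.univ i, Finset.sum_ite_eq' Finset.univ (τ i)]
  simp only [Finset.mem_univ, if_true]
  have e1 : pairMat τ a (fun i' => -b i') i j
      = (if j = i then a i else 0) + (if j = τ i then -b i else 0) :=
    pairMat_apply_split τ hfix _ _ i j
  have e2 : pairMat τ a (fun i' => -b i') (τ i) j
      = (if j = τ i then a i else 0) + (if j = i then -b i else 0) := by
    rw [pairMat_apply_split τ hfix, hτ i, ha i, hb i]
  rw [e1, e2]
  by_cases h1 : j = i
  · have h2 : ¬ j = τ i := by rw [h1]; exact hii
    rw [h1, Matrix.diagonal_apply_eq]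
    simp [hii]
    ring
  · by_cases h2 : j = τ i
    · rw [h2, Matrix.diagonal_apply_ne' _ (hfix i)]
      simp [hii, Ne.symm hii]
      ring
    · have hij : ¬ i = j := fun h => h1 h.symm
      simp [Matrix.diagonal_apply, hij, h1, h2]

lemma pairMat_conj (τ : ι → ι) (hτ : Function.Involutive τ) (hfix : ∀ i, τ i ≠ i)
    (a b : ι → R) (ε : ι → R) (hε1 : ∀ i, ε i * ε i = 1) (hε2 : ∀ i, ε i * ε (τ i) = -1) :
    Matrix.diagonal ε * pairMat τ a b * Matrix.diagonal ε = pairMat τ a (fun i => -b i) := by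
  ext i j
  rw [Matrix.mul_apply]
  have hii : ¬ i = τ i := fun h => hfix i h.symm
  have key : ∀ k, (Matrix.diagonal ε * pairMat τ a b) i k * Matrix.diagonal ε k j
      = if k = j then (Matrix.diagonal ε * pairMat τ a b) i j * ε j else 0 := by
    intro k
    by_cases h : k = j
    · rw [h]; simp [Matrix.diagonal_apply_eq]
    · simp [Matrix.diagonal_apply_ne' _ (fun hh => h hh.symm), h]
  rw [Finset.sum_congr rfl (fun k _ => key k), Finset.sum_ite_eq' Finset.univ j]
  simp only [Finset.mem_univ, if_true, Matrix.diagonal_mul, pairMat, Matrix.of_apply]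
  by_cases h1 : j = i
  · rw [h1]
    simp [hii]
    rw [mul_comm, ← mul_assoc, hε1 i, one_mul]
  · by_cases h2 : j = τ i
    · rw [h2]
      simp [Ne.symm hii]
      rw [mul_comm (ε i) (b i), mul_assoc, hε2 i]
      ring
    · simp [h1, h2]

lemma pairMat_det_sq (τ : ι → ι) (hτ : Function.Involutive τ) (hfix : ∀ i, τ i ≠ i)
    (a b : ι → R) (ha : ∀ i, a (τ i) = a i) (hb : ∀ i, b (τ i) = b i)
    (ε : ι → R) (hε1 : ∀ i, ε i * ε i = 1) (hε2 : ∀ i, ε i * ε (τ i) = -1) :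
    (pairMat τ a b).det ^ 2 = ∏ i, (a i ^ 2 - b i ^ 2) := by
  have h1 := pairMat_mul τ hτ hfix a b ha hb
  have h2 := pairMat_conj τ hτ hfix a b ε hε1 hε2
  have hdet : (pairMat τ a (fun i => -b i)).det = (pairMat τ a b).det := by
    rw [← h2, Matrix.det_mul, Matrix.det_mul, Matrix.det_diagonal]
    rw [mul_comm, ← mul_assoc, ← Finset.prod_mul_distrib]
    simp [hε1]
  calc (pairMat τ a b).det ^ 2
      = (pairMat τ a b).det * (pairMat τ a (fun i => -b i)).det := by rw [hdet]; ring
    _ = ∏ i, (a i ^ 2 - b i ^ 2) := by rw [← Matrix.det_mul, h1, Matrix.det_diagonal]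

end Abstract

def flp (N : ℕ) (i : Fin N → Fin 2) : Fin N → Fin 2 := fun k => i k + 1

def wt {N : ℕ} (i : Fin N → Fin 2) : ℕ := ∑ k, (i k : ℕ)

lemma flp_involutive (N : ℕ) : Function.Involutive (flp N) := by
  intro i; funext k
  have : ∀ x : Fin 2, x + 1 + 1 = x := by decide
  simp [flp, this]

lemma flp_ne {N : ℕ} (hN : 0 < N) (i : Fin N → Fin 2) : flp N i ≠ i := by
  intro h
  have h0 := congrFun h ⟨0, hN⟩
  have : ∀ x : Fin 2, x + 1 ≠ x := by decide
  exact this _ h0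

lemma wt_add_flp {N : ℕ} (i : Fin N → Fin 2) : wt i + wt (flp N i) = N := by
  have : ∀ x : Fin 2, (x : ℕ) + ((x + 1 : Fin 2) : ℕ) = 1 := by decide
  simp only [wt, flp, ← Finset.sum_add_distrib]
  simp [this]

-- pauli entry facts
lemma pauli0_offdiag (x : Fin 2) : pauli 0 x (x + 1) = 1 := by fin_cases x <;> simp [pauli]
lemma pauli0_diag (x : Fin 2) : pauli 0 x x = 0 := by fin_cases x <;> simp [pauli]
lemma pauli1_offdiag (x : Fin 2) : pauli 1 x (x + 1) = Complex.I * (-1) ^ (1 + (x : ℕ)) := by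
  fin_cases x <;> simp [pauli]
lemma pauli1_diag (x : Fin 2) : pauli 1 x x = 0 := by fin_cases x <;> simp [pauli]
lemma pauli2_diag (x : Fin 2) : pauli 2 x x = (-1) ^ (x : ℕ) := by fin_cases x <;> simp [pauli]
lemma pauli2_offdiag (x y : Fin 2) (h : y ≠ x) : pauli 2 x y = 0 := by
  fin_cases x <;> fin_cases y <;> simp_all [pauli]

lemma fin2_eq_of_ne_succ {x y : Fin 2} (h : y ≠ x + 1) : y = x := by
  revert h; revert x y; decide

lemma kron_off_zero {N : ℕ} (A : Matrix (Fin 2) (Fin 2) ℂ) (hd : ∀ x, A x x = 0)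
    (i j : Fin N → Fin 2) (h : j ≠ flp N i) : kronPow A N i j = 0 := by
  obtain ⟨k, hk⟩ := Function.ne_iff.mp h
  have : j k = i k := fin2_eq_of_ne_succ hk
  exact Finset.prod_eq_zero (Finset.mem_univ k) (by rw [this, hd])

lemma kron_diag_zero {N : ℕ} (A : Matrix (Fin 2) (Fin 2) ℂ) (ho : ∀ x y, y ≠ x → A x y = 0)
    (i j : Fin N → Fin 2) (h : j ≠ i) : kronPow A N i j = 0 := by
  obtain ⟨k, hk⟩ := Function.ne_iff.mp h
  exact Finset.prod_eq_zero (Finset.mem_univ k) (ho _ _ hk)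

lemma kron0_flp {N : ℕ} (i : Fin N → Fin 2) : kronPow (pauli 0) N i (flp N i) = 1 := by
  simp [kronPow, flp, pauli0_offdiag]

lemma kron2_diag {N : ℕ} (i : Fin N → Fin 2) : kronPow (pauli 2) N i i = (-1) ^ (wt i) := by
  simp only [kronPow, Matrix.of_apply, pauli2_diag, wt]
  rw [Finset.prod_pow_eq_pow_sum]

lemma kron1_flp {N : ℕ} (hN : Even N) (i : Fin N → Fin 2) :
    kronPow (pauli 1) N i (flp N i) = (-1) ^ (N / 2) * (-1) ^ (wt i) := by
  simp only [kronPow, Matrix.of_apply, flp, pauli1_offdiag]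
  rw [Finset.prod_mul_distrib, Finset.prod_const]
  have h1 : ∏ k : Fin N, ((-1 : ℂ)) ^ (1 + (i k : ℕ)) = (-1) ^ (∑ k : Fin N, (1 + (i k : ℕ))) :=
    Finset.prod_pow_eq_pow_sum _ _ _
  rw [h1]
  have h2 : ∑ k : Fin N, (1 + (i k : ℕ)) = N + wt i := by
    rw [Finset.sum_add_distrib]; simp [wt]
  rw [h2, pow_add, hN.neg_one_pow, one_mul]
  obtain ⟨m, hm⟩ := hN
  have hm2 : N = 2 * m := by omega
  have : (Complex.I) ^ N = (-1 : ℂ) ^ (N / 2) := by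
    rw [hm2]
    rw [pow_mul]
    norm_num [Complex.I_sq]
  rw [Finset.card_univ, Fintype.card_fin, this]

lemma Mstate_eq_pairMat (N : ℕ) (hN : Even N) (hN1 : 0 < N) (c : Fin 3 → ℝ) :
    Mstate N c = pairMat (flp N)
      (fun i => ((2:ℂ)^N)⁻¹ * (1 + (c 2 : ℂ) * (-1)^(wt i)))
      (fun i => ((2:ℂ)^N)⁻¹ * ((c 0 : ℂ) + (c 1 : ℂ) * (-1)^(N/2) * (-1)^(wt i))) := by
  ext i j
  simp only [Mstate, Matrix.smul_apply, Matrix.add_apply, Matrix.sum_apply,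
    Fin.sum_univ_three, Matrix.smul_apply, smul_eq_mul, pairMat, Matrix.of_apply]
  by_cases h1 : j = i
  · have h2 : ¬ j = flp N i := by rw [h1]; exact fun h => flp_ne hN1 i h.symm
    rw [h1, if_pos rfl]
    rw [Matrix.one_apply_eq, kron2_diag,
      kron_off_zero (pauli 0) pauli0_diag i i (fun h => flp_ne hN1 i h.symm),
      kron_off_zero (pauli 1) pauli1_diag i i (fun h => flp_ne hN1 i h.symm)]
    ring
  · rw [if_neg h1, Matrix.one_apply_ne' h1,
      kron_diag_zero (pauli 2) pauli2_offdiag i j h1]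
    by_cases h2 : j = flp N i
    · rw [if_pos h2, h2, kron0_flp, kron1_flp hN]
      ring
    · rw [if_neg h2, kron_off_zero (pauli 0) pauli0_diag i j h2,
        kron_off_zero (pauli 1) pauli1_diag i j h2]
      ring

lemma charmatrix_pairMat {ι : Type*} [Fintype ι] [DecidableEq ι] {R : Type*} [CommRing R]
    (τ : ι → ι) (hfix : ∀ i, τ i ≠ i) (a b : ι → R) :
    charmatrix (pairMat τ a b) =
      pairMat τ (fun i => (X : R[X]) - C (a i)) (fun i => - C (b i)) := by
  ext i j
  by_cases h1 : j = i
  · have h2 : ¬ j = τ i := by rw [h1]; exact fun h => hfix i h.symm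
    rw [h1, charmatrix_apply_eq]
    simp [pairMat, h2, fun h : i = τ i => hfix i h.symm]
  · rw [charmatrix_apply_ne _ _ _ (fun h => h1 h.symm)]
    by_cases h2 : j = τ i
    · simp [pairMat, h1, h2, hfix i]
    · simp [pairMat, h1, h2]

lemma card_even_wt (N : ℕ) (hN1 : 0 < N) :
    (Finset.univ.filter (fun i : Fin N → Fin 2 => Even (wt i))).card = 2 ^ (N - 1) := by
  classical
  set k0 : Fin N := ⟨0, hN1⟩
  set u : (Fin N → Fin 2) → (Fin N → Fin 2) := fun i => Function.update i k0 (i k0 + 1)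
  have hwt : ∀ i : Fin N → Fin 2, (wt (u i)) % 2 = 1 - (wt i) % 2 ∧ wt i % 2 ≤ 1 := by
    intro i
    have hsum : ∀ v : Fin 2, (∑ k, ((Function.update i k0 v k : Fin 2) : ℕ))
        = (v : ℕ) + ∑ k ∈ Finset.univ.erase k0, ((i k : ℕ)) := by
      intro v
      rw [← Finset.add_sum_erase _ _ (Finset.mem_univ k0)]
      simp only [Function.update_self]
      congr 1
      exact Finset.sum_congr rfl (fun k hk =>
        by rw [Function.update_of_ne (Finset.ne_of_mem_erase hk)])
    have h1 : wt (u i) = ((i k0 + 1 : Fin 2) : ℕ) + ∑ k ∈ Finset.univ.erase k0, ((i k : ℕ)) :=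
      hsum _
    have h2 : wt i = ((i k0 : Fin 2) : ℕ) + ∑ k ∈ Finset.univ.erase k0, ((i k : ℕ)) := by
      rw [wt, ← Finset.add_sum_erase _ _ (Finset.mem_univ k0)]
    have h3 : ((i k0 : Fin 2) : ℕ) + ((i k0 + 1 : Fin 2) : ℕ) = 1 := by
      generalize i k0 = x; revert x; decide
    omega
  have hodd : (Finset.univ.filter (fun i : Fin N → Fin 2 => Even (wt i))).card
      = (Finset.univ.filter (fun i : Fin N → Fin 2 => ¬ Even (wt i))).card := by
    apply Finset.card_bij' (fun i _ => u i) (fun i _ => u i)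
    · intro i hi
      simp only [Finset.mem_filter, Finset.mem_univ, true_and] at hi ⊢
      have := hwt i
      rw [Nat.even_iff] at hi ⊢
      omega
    · intro i hi
      simp only [Finset.mem_filter, Finset.mem_univ, true_and] at hi ⊢
      have := hwt i
      rw [Nat.even_iff] at hi ⊢
      omega
    · intro i _
      funext k
      by_cases h : k = k0
      · subst h
        simp only [u, Function.update_self]
        have h211 : ∀ x : Fin 2, x + 1 + 1 = x := by decide
        exact h211 _
      · simp [u, Function.update_of_ne h]
    · intro i _
      funext k
      by_cases h : k = k0
      · subst h
        simp only [u, Function.update_self]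
        have h211 : ∀ x : Fin 2, x + 1 + 1 = x := by decide
        exact h211 _
      · simp [u, Function.update_of_ne h]
  have htot := Finset.card_filter_add_card_filter_not
    (s := (Finset.univ : Finset (Fin N → Fin 2))) (p := fun i => Even (wt i))
  have hcard : (Finset.univ : Finset (Fin N → Fin 2)).card = 2 ^ N := by
    simp [Finset.card_univ]
  have hpow : 2 ^ N = 2 * 2 ^ (N - 1) := by
    rw [← pow_succ']
    congr 1
    omega
  omega

lemma card_not_even_wt (N : ℕ) (hN1 : 0 < N) :
    (Finset.univ.filter (fun i : Fin N → Fin 2 => ¬ Even (wt i))).card = 2 ^ (N - 1) := by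
  have h1 := card_even_wt N hN1
  have htot := Finset.card_filter_add_card_filter_not
    (s := (Finset.univ : Finset (Fin N → Fin 2))) (p := fun i => Even (wt i))
  have hcard : (Finset.univ : Finset (Fin N → Fin 2)).card = 2 ^ N := by
    simp [Finset.card_univ]
  have hpow : 2 ^ N = 2 * 2 ^ (N - 1) := by
    rw [← pow_succ']
    congr 1
    omega
  omega

theorem stmt19 (N : ℕ) (hN : Even N) (hN2 : 2 ≤ N) (c : Fin 3 → ℝ) :
    (Mstate N c).charpoly =
      (X - C ((((2:ℝ)^N)⁻¹ * (1 + c 0 + (-1:ℝ)^(N/2) * c 1 + c 2) : ℝ) : ℂ)) ^ 2^(N-2) *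
      (X - C ((((2:ℝ)^N)⁻¹ * (1 + c 0 - (-1:ℝ)^(N/2) * c 1 - c 2) : ℝ) : ℂ)) ^ 2^(N-2) *
      (X - C ((((2:ℝ)^N)⁻¹ * (1 - c 0 - (-1:ℝ)^(N/2) * c 1 + c 2) : ℝ) : ℂ)) ^ 2^(N-2) *
      (X - C ((((2:ℝ)^N)⁻¹ * (1 - c 0 + (-1:ℝ)^(N/2) * c 1 - c 2) : ℝ) : ℂ)) ^ 2^(N-2) := by
  have hN1 : 0 < N := by omega
  set ι := (Fin N → Fin 2)
  set d : ι → ℂ := fun i => ((2:ℂ)^N)⁻¹ * (1 + (c 2 : ℂ) * (-1)^(wt i)) with hd_def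
  set o : ι → ℂ := fun i => ((2:ℂ)^N)⁻¹ * ((c 0 : ℂ) + (c 1 : ℂ) * (-1)^(N/2) * (-1)^(wt i))
    with ho_def
  -- (-1)^wt invariance under flp
  have hflipwt : ∀ i : ι, ((-1:ℂ))^(wt (flp N i)) = (-1)^(wt i) := by
    intro i
    have h1 : ((-1:ℂ))^(wt i + wt (flp N i)) = 1 := by rw [wt_add_flp i]; exact hN.neg_one_pow
    have h2 : ((-1:ℂ))^(wt i) * ((-1:ℂ))^(wt i) = 1 := by
      rw [← pow_add]; exact Even.neg_one_pow ⟨wt i, rfl⟩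
    rw [pow_add] at h1
    have hne : ((-1:ℂ))^(wt i) ≠ 0 := pow_ne_zero _ (by norm_num)
    exact mul_left_cancel₀ hne (h1.trans h2.symm)
  have hd : ∀ i : ι, d (flp N i) = d i := by intro i; simp only [hd_def, hflipwt]
  have ho : ∀ i : ι, o (flp N i) = o i := by intro i; simp only [ho_def, hflipwt]
  -- ε
  set k0 : Fin N := ⟨0, hN1⟩
  set ε : ι → ℂ[X] := fun i => (-1:ℂ[X])^((i k0 : Fin 2):ℕ) with hε_def
  have hε1 : ∀ i : ι, ε i * ε i = 1 := by
    intro i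
    simp only [hε_def, ← pow_add]
    exact Even.neg_one_pow ⟨_, rfl⟩
  have hε2 : ∀ i : ι, ε i * ε (flp N i) = -1 := by
    intro i
    simp only [hε_def, flp, ← pow_add]
    have : ∀ x : Fin 2, (x:ℕ) + ((x+1 : Fin 2):ℕ) = 1 := by decide
    rw [this (i k0), pow_one]
  -- charpoly squared
  have hsq : (Mstate N c).charpoly ^ 2
      = ∏ i : ι, (((X : ℂ[X]) - C (d i))^2 - (- C (o i))^2) := by
    rw [Matrix.charpoly, Mstate_eq_pairMat N hN hN1 c, charmatrix_pairMat _ (flp_ne hN1)]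
    exact pairMat_det_sq (flp N) (flp_involutive N) (flp_ne hN1) _ _
      (fun i => by rw [hflipwt i]) (fun i => by rw [hflipwt i]) ε hε1 hε2
  -- factor each term
  have hfac : ∀ i : ι, ((X : ℂ[X]) - C (d i))^2 - (- C (o i))^2
      = (X - C (d i + o i)) * (X - C (d i - o i)) := by
    intro i; rw [map_add, map_sub]; ring
  -- the four eigenvalues
  set v1 : ℂ := ((((2:ℝ)^N)⁻¹ * (1 + c 0 + (-1:ℝ)^(N/2) * c 1 + c 2) : ℝ) : ℂ) with hv1
  set v2 : ℂ := ((((2:ℝ)^N)⁻¹ * (1 + c 0 - (-1:ℝ)^(N/2) * c 1 - c 2) : ℝ) : ℂ) with hv2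
  set v3 : ℂ := ((((2:ℝ)^N)⁻¹ * (1 - c 0 - (-1:ℝ)^(N/2) * c 1 + c 2) : ℝ) : ℂ) with hv3
  set v4 : ℂ := ((((2:ℝ)^N)⁻¹ * (1 - c 0 + (-1:ℝ)^(N/2) * c 1 - c 2) : ℝ) : ℂ) with hv4
  have heven : ∀ i : ι, Even (wt i) →
      d i + o i = v1 ∧ d i - o i = v3 := by
    intro i hi
    have h1 : ((-1:ℂ))^(wt i) = 1 := hi.neg_one_pow
    constructor <;>
    · simp only [hd_def, ho_def, h1, hv1, hv3]
      push_cast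
      ring
  have hodd : ∀ i : ι, ¬ Even (wt i) →
      d i + o i = v2 ∧ d i - o i = v4 := by
    intro i hi
    have h1 : ((-1:ℂ))^(wt i) = -1 := (Nat.not_even_iff_odd.mp hi).neg_one_pow
    constructor <;>
    · simp only [hd_def, ho_def, h1, hv2, hv4]
      push_cast
      ring
  -- split product over parity
  have hprod : ∏ i : ι, (((X : ℂ[X]) - C (d i))^2 - (- C (o i))^2)
      = (((X : ℂ[X]) - C v1) * (X - C v3))^(2^(N-1))
        * (((X : ℂ[X]) - C v2) * (X - C v4))^(2^(N-1)) := by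
    rw [← Finset.prod_filter_mul_prod_filter_not Finset.univ (fun i : ι => Even (wt i))]
    congr 1
    · rw [Finset.prod_congr rfl (fun i hi => by
        rw [hfac i, (heven i (Finset.mem_filter.mp hi).2).1,
          (heven i (Finset.mem_filter.mp hi).2).2]),
        Finset.prod_const, card_even_wt N hN1]
    · rw [Finset.prod_congr rfl (fun i hi => by
        rw [hfac i, (hodd i (Finset.mem_filter.mp hi).2).1,
          (hodd i (Finset.mem_filter.mp hi).2).2]),
        Finset.prod_const]
      congr 1
      convert card_not_even_wt N hN1 using 2
  -- RHS squared
  set Q : ℂ[X] := (X - C v1) ^ 2^(N-2) * (X - C v2) ^ 2^(N-2) *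
      (X - C v3) ^ 2^(N-2) * (X - C v4) ^ 2^(N-2) with hQ
  have hQ2 : Q ^ 2 = (((X : ℂ[X]) - C v1) * (X - C v3))^(2^(N-1))
        * (((X : ℂ[X]) - C v2) * (X - C v4))^(2^(N-1)) := by
    have hE : 2^(N-1) = 2^(N-2) * 2 := by
      rw [← pow_succ]
      congr 1
      omega
    rw [hE,
      show (((X:ℂ[X]) - C v1) * (X - C v3))^(2^(N-2)*2)
        = (((X:ℂ[X]) - C v1)^(2^(N-2)) * ((X:ℂ[X]) - C v3)^(2^(N-2)))^2 by rw [pow_mul, mul_pow],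
      show (((X:ℂ[X]) - C v2) * (X - C v4))^(2^(N-2)*2)
        = (((X:ℂ[X]) - C v2)^(2^(N-2)) * ((X:ℂ[X]) - C v4)^(2^(N-2)))^2 by rw [pow_mul, mul_pow],
      hQ]
    ring
  -- monic + squares equal
  have hPQ : (Mstate N c).charpoly ^ 2 = Q ^ 2 := by rw [hsq, hprod, hQ2]
  have hmonicP : ((Mstate N c).charpoly).Monic := Matrix.charpoly_monic _
  have hmonicQ : Q.Monic := by
    apply Polynomial.Monic.mul
    apply Polynomial.Monic.mul
    apply Polynomial.Monic.mul
    all_goals exact (Polynomial.monic_X_sub_C _).pow _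
  have : ((Mstate N c).charpoly - Q) * ((Mstate N c).charpoly + Q) = 0 := by
    linear_combination hPQ
  rcases mul_eq_zero.mp this with h | h
  · exact sub_eq_zero.mp h
  · exfalso
    have hPn : (Mstate N c).charpoly = -Q := by linear_combination h
    have := hmonicP.leadingCoeff
    rw [hPn, leadingCoeff_neg, hmonicQ.leadingCoeff] at this
    norm_num at this
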